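/- Fix λ > 0, t > 0, and n > 0. The function τ ↦ -(λ/t)(τ + (n/(8λ²)) ln(1 + t/τ)) on (0,∞) attains its maximum at τ₀ = (t/2)(√(1 + n/(2λ²t)) - 1), and the maximum value equals -λ G(1/(λ²t)), where G(s) = (1/2)(√(1 + ns/2) - 1) + (n/8)s ln(1 + 2/(√(1 + ns/2) - 1)). -/

import Mathlib

open Real Set

/-- `τ₀` is the positive root of `τ (τ + t) = c t`, the critical-point equation of the
function; the bound comes from `log x ≤ x - 1`, which leaves the square `(τ - τ₀)² / (τ + t)`. -/
theorem isMinOn_add_mul_log_one_add_div {c t τ₀ : ℝ} (hc : 0 < c) (ht : 0 < t) (hτ₀ : 0 < τ₀)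
    (hroot : τ₀ * (τ₀ + t) = c * t) :
    IsMinOn (fun τ => τ + c * log (1 + t / τ)) (Ioi 0) τ₀ := by
  intro τ (hτ : 0 < τ)
  set a := 1 + t / τ
  set b := 1 + t / τ₀
  have ha : 0 < a := by positivity
  have hb : 0 < b := by positivity
  have hlog : 1 - b / a ≤ log a - log b := by
    have := log_le_sub_one_of_pos (div_pos hb ha)
    rw [log_div hb.ne' ha.ne'] at this
    linarith
  have hsquare : (τ - τ₀) + c * (1 - b / a) = (τ - τ₀) ^ 2 / (τ + t) := by
    have hc' : c = τ₀ * (τ₀ + t) / t := by rw [hroot]; field_simp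
    simp only [a, b, hc']
    field_simp
    ring
  have hsquare_nonneg : 0 ≤ (τ - τ₀) ^ 2 / (τ + t) := by positivity
  show τ₀ + c * log b ≤ τ + c * log a
  nlinarith [mul_le_mul_of_nonneg_left hlog hc.le]

theorem half_mul_sqrt_one_add_sub_one_pos {t s : ℝ} (ht : 0 < t) (hs : 0 < s) :
    0 < t / 2 * (√(1 + s) - 1) := by
  have : 1 < √(1 + s) := by rw [lt_sqrt zero_le_one]; linarith
  exact mul_pos (by positivity) (by linarith)

theorem half_mul_sqrt_one_add_sub_one_root {t s : ℝ} (hs : 0 ≤ s) :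
    t / 2 * (√(1 + s) - 1) * (t / 2 * (√(1 + s) - 1) + t) = t ^ 2 * s / 4 := by
  have h := sq_sqrt (show 0 ≤ 1 + s by linarith)
  linear_combination t ^ 2 / 4 * h

theorem stmt_3 (lam t n : ℝ) (hlam : 0 < lam) (ht : 0 < t) (hn : 0 < n)
    (f G : ℝ → ℝ)
    (hf : ∀ τ, f τ = -(lam/t) * (τ + (n/(8*lam^2)) * Real.log (1 + t/τ)))
    (hG : ∀ s, G s = (1/2) * (Real.sqrt (1 + (n/2)*s) - 1) +
      (n/8) * s * Real.log (1 + 2 / (Real.sqrt (1 + (n/2)*s) - 1))) :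
    IsMaxOn f (Set.Ioi 0) ((t/2) * (Real.sqrt (1 + n/(2*lam^2*t)) - 1)) ∧
    f ((t/2) * (Real.sqrt (1 + n/(2*lam^2*t)) - 1)) = -lam * G (1/(lam^2*t)) := by
  have hs : 0 < n / (2 * lam ^ 2 * t) := by positivity
  have hτ₀ := half_mul_sqrt_one_add_sub_one_pos ht hs
  have hroot : t / 2 * (√(1 + n / (2 * lam ^ 2 * t)) - 1) *
      (t / 2 * (√(1 + n / (2 * lam ^ 2 * t)) - 1) + t) = n / (8 * lam ^ 2) * t := by
    rw [half_mul_sqrt_one_add_sub_one_root hs.le]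
    field_simp
    ring
  have hmin := isMinOn_add_mul_log_one_add_div (by positivity) ht hτ₀ hroot
  constructor
  · intro τ hτ
    rw [mem_ofPred_eq, hf, hf]
    exact mul_le_mul_of_nonpos_left (hmin hτ) (by simp only [neg_nonpos]; positivity)
  · have hr : √(1 + n / (2 * lam ^ 2 * t)) - 1 ≠ 0 :=
      (pos_of_mul_pos_right hτ₀ (by positivity)).ne'
    have harg : 1 + n / 2 * (1 / (lam ^ 2 * t)) = 1 + n / (2 * lam ^ 2 * t) := by
      field_simp
    have hratio : t / (t / 2 * (√(1 + n / (2 * lam ^ 2 * t)) - 1)) =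
        2 / (√(1 + n / (2 * lam ^ 2 * t)) - 1) := by
      field_simp [hr]
    rw [hf, hG, harg, hratio]
    field_simp
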